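/- arXiv:2003.10537 — 5 statements merged into one kernel-verified Lean document; each statement's English description precedes it below -/
import Mathlib

section
/- For any complex three-qubit tensor ψ, there exist 2×2 unitary matrices U, V, W and a core tensor t such that ψ_{j1 j2 j3} = Σ_{i1,i2,i3} U_{j1 i1} V_{j2 i2} W_{j3 i3} t_{i1 i2 i3}, and each of the three one-body reduced density matrices of t is diagonal with non-increasing diagonal entries. -/
/-- One-body reduced density matrices of a three-qubit tensor. -/
noncomputable def rhoA (t : Fin 2 × Fin 2 × Fin 2 → ℂ) : Matrix (Fin 2) (Fin 2) ℂ :=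
  fun j k => ∑ i2 : Fin 2, ∑ i3 : Fin 2, t (j, i2, i3) * star (t (k, i2, i3))

noncomputable def rhoB (t : Fin 2 × Fin 2 × Fin 2 → ℂ) : Matrix (Fin 2) (Fin 2) ℂ :=
  fun j k => ∑ i1 : Fin 2, ∑ i3 : Fin 2, t (i1, j, i3) * star (t (i1, k, i3))

noncomputable def rhoC (t : Fin 2 × Fin 2 × Fin 2 → ℂ) : Matrix (Fin 2) (Fin 2) ℂ :=
  fun j k => ∑ i1 : Fin 2, ∑ i2 : Fin 2, t (i1, i2, j) * star (t (i1, i2, k))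

/-!
Each one-body reduced density matrix of `ψ` is Hermitian, hence diagonalized by a unitary with
its eigenvalues in decreasing order; let `U`, `V`, `W` be these unitaries and
`t := (Uᴴ, Vᴴ, Wᴴ) · ψ`. The matrix `ρ^A` is the Gram matrix `M Mᴴ` of the mode-1 unfolding `M`,
and a unitary change of basis in modes 2 and 3 multiplies `M` on the right by a unitary, so it
leaves `M Mᴴ` unchanged: `ρ^A(t) = Uᴴ ρ^A(ψ) U` is the sorted diagonal matrix. Permuting the
modes reduces `ρ^B` and `ρ^C` to `ρ^A`.
-/

open Matrix Kronecker

namespace Matrix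

variable {𝕜 : Type*} [RCLike 𝕜] {n : ℕ}

theorem submatrix_id_mem_unitaryGroup {m : Type*} [Fintype m] [DecidableEq m]
    {R : Type*} [CommRing R] [StarRing R] {U : Matrix m m R}
    (hU : U ∈ unitaryGroup m R) (σ : Equiv.Perm m) :
    U.submatrix id σ ∈ unitaryGroup m R := by
  rw [mem_unitaryGroup_iff, star_eq_conjTranspose, conjTranspose_submatrix, submatrix_mul_equiv,
    ← star_eq_conjTranspose, mem_unitaryGroup_iff.mp hU, submatrix_id_id]

theorem IsHermitian.exists_unitary_star_mul_mul_eq_diagonal_antitone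
    {A : Matrix (Fin n) (Fin n) 𝕜} (hA : A.IsHermitian) :
    ∃ U ∈ unitaryGroup (Fin n) 𝕜, ∃ d : Fin n → ℝ, Antitone d ∧
      star U * A * U = diagonal (fun i => (d i : 𝕜)) := by
  set P : Matrix (Fin n) (Fin n) 𝕜 := ↑hA.eigenvectorUnitary
  have hdiag : star P * A * P = diagonal (RCLike.ofReal ∘ hA.eigenvalues) := by
    simpa [Unitary.conjStarAlgAut_apply] using hA.conjStarAlgAut_star_eigenvectorUnitary
  -- sorting increasingly in `ℝᵒᵈ` sorts the eigenvalues decreasingly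
  set σ := Tuple.sort (OrderDual.toDual ∘ hA.eigenvalues)
  refine ⟨P.submatrix id σ,
    submatrix_id_mem_unitaryGroup hA.eigenvectorUnitary.2 σ, hA.eigenvalues ∘ σ,
    fun _ _ h => Tuple.monotone_sort (OrderDual.toDual ∘ hA.eigenvalues) h, ?_⟩
  calc star (P.submatrix id σ) * A * P.submatrix id σ
        = (star P).submatrix σ id * A.submatrix id id * P.submatrix id σ := by
          rw [star_eq_conjTranspose, conjTranspose_submatrix, submatrix_id_id]; rfl
    _ = (star P * A * P).submatrix σ σ := by
          rw [submatrix_mul _ _ _ id _ Function.bijective_id,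
            submatrix_mul _ _ _ id _ Function.bijective_id]
    _ = _ := by rw [hdiag, submatrix_diagonal_equiv]; rfl

end Matrix

section Tucker

variable {R : Type*} {ι₁ ι₂ ι₃ κ₁ κ₂ κ₃ : Type*}

def unfold₁ (t : ι₁ × ι₂ × ι₃ → R) : Matrix ι₁ (ι₂ × ι₃) R :=
  of fun i p => t (i, p.1, p.2)

theorem unfold₁_injective :
    Function.Injective (unfold₁ : (ι₁ × ι₂ × ι₃ → R) → Matrix ι₁ (ι₂ × ι₃) R) :=
  fun _ _ h => funext fun ⟨i, j, k⟩ => congrFun (congrFun h i) (j, k)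

variable [CommSemiring R] [Fintype ι₁] [Fintype ι₂] [Fintype ι₃]

def tucker (A : Matrix κ₁ ι₁ R) (B : Matrix κ₂ ι₂ R) (C : Matrix κ₃ ι₃ R)
    (t : ι₁ × ι₂ × ι₃ → R) : κ₁ × κ₂ × κ₃ → R :=
  fun j => ∑ i1, ∑ i2, ∑ i3, A j.1 i1 * B j.2.1 i2 * C j.2.2 i3 * t (i1, i2, i3)

theorem unfold₁_tucker (A : Matrix κ₁ ι₁ R) (B : Matrix κ₂ ι₂ R) (C : Matrix κ₃ ι₃ R)
    (t : ι₁ × ι₂ × ι₃ → R) : unfold₁ (tucker A B C t) = A * unfold₁ t * (B ⊗ₖ C)ᵀ := by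
  ext j ⟨k2, k3⟩
  simp only [unfold₁, tucker, of_apply, mul_apply, Fintype.sum_prod_type, transpose_apply,
    kroneckerMap_apply, Finset.sum_mul]
  rw [Finset.sum_comm]
  refine Finset.sum_congr rfl fun i2 _ => ?_
  rw [Finset.sum_comm]
  refine Finset.sum_congr rfl fun i3 _ => Finset.sum_congr rfl fun i1 _ => ?_
  ring

theorem tucker_tucker (A : Matrix κ₁ ι₁ R) (B : Matrix κ₂ ι₂ R) (C : Matrix κ₃ ι₃ R)
    {μ₁ μ₂ μ₃ : Type*} [Fintype μ₁] [Fintype μ₂] [Fintype μ₃]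
    (A' : Matrix ι₁ μ₁ R) (B' : Matrix ι₂ μ₂ R) (C' : Matrix ι₃ μ₃ R) (t : μ₁ × μ₂ × μ₃ → R) :
    tucker A B C (tucker A' B' C' t) = tucker (A * A') (B * B') (C * C') t := by
  apply unfold₁_injective
  simp only [unfold₁_tucker, Matrix.mul_assoc, ← transpose_mul, mul_kronecker_mul]

theorem tucker_one [DecidableEq ι₁] [DecidableEq ι₂] [DecidableEq ι₃] (t : ι₁ × ι₂ × ι₃ → R) :
    tucker 1 1 1 t = t := by
  apply unfold₁_injective
  rw [unfold₁_tucker, one_kronecker_one, transpose_one, Matrix.one_mul, Matrix.mul_one]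

theorem tucker_comp_swap (A : Matrix κ₁ ι₁ R) (B : Matrix κ₂ ι₂ R) (C : Matrix κ₃ ι₃ R)
    (t : ι₁ × ι₂ × ι₃ → R) :
    tucker A B C t ∘ (fun p => (p.2.1, p.1, p.2.2)) =
      tucker B A C (t ∘ fun p => (p.2.1, p.1, p.2.2)) := by
  funext j
  simp only [tucker, Function.comp_apply]
  rw [Finset.sum_comm]
  refine Finset.sum_congr rfl fun i2 _ => Finset.sum_congr rfl fun i1 _ =>
    Finset.sum_congr rfl fun i3 _ => ?_
  ring

theorem tucker_comp_rotate (A : Matrix κ₁ ι₁ R) (B : Matrix κ₂ ι₂ R) (C : Matrix κ₃ ι₃ R)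
    (t : ι₁ × ι₂ × ι₃ → R) :
    tucker A B C t ∘ (fun p => (p.2.1, p.2.2, p.1)) =
      tucker C A B (t ∘ fun p => (p.2.1, p.2.2, p.1)) := by
  funext j
  simp only [tucker, Function.comp_apply]
  conv_rhs => rw [Finset.sum_comm]
  refine Finset.sum_congr rfl fun i1 _ => ?_
  conv_rhs => rw [Finset.sum_comm]
  refine Finset.sum_congr rfl fun i2 _ => Finset.sum_congr rfl fun i3 _ => ?_
  ring

end Tucker

theorem rhoA_eq_unfold₁ (t : Fin 2 × Fin 2 × Fin 2 → ℂ) :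
    rhoA t = unfold₁ t * (unfold₁ t)ᴴ := by
  ext j k
  simp [rhoA, unfold₁, mul_apply, Fintype.sum_prod_type]

theorem rhoA_isHermitian (t : Fin 2 × Fin 2 × Fin 2 → ℂ) : (rhoA t).IsHermitian :=
  rhoA_eq_unfold₁ t ▸ isHermitian_mul_conjTranspose_self _

theorem rhoA_tucker (A : Matrix (Fin 2) (Fin 2) ℂ) {V W : Matrix (Fin 2) (Fin 2) ℂ}
    (hV : V ∈ unitaryGroup (Fin 2) ℂ) (hW : W ∈ unitaryGroup (Fin 2) ℂ)
    (t : Fin 2 × Fin 2 × Fin 2 → ℂ) : rhoA (tucker A V W t) = A * rhoA t * Aᴴ := by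
  have hK : (V ⊗ₖ W)ᵀ * ((V ⊗ₖ W)ᵀ)ᴴ = 1 :=
    mem_unitaryGroup_iff.mp (transpose_mem_unitaryGroup_iff.mpr (kronecker_mem_unitary hV hW))
  rw [rhoA_eq_unfold₁, rhoA_eq_unfold₁, unfold₁_tucker, conjTranspose_mul, conjTranspose_mul]
  simp only [Matrix.mul_assoc]
  rw [← Matrix.mul_assoc (V ⊗ₖ W)ᵀ, hK, Matrix.one_mul]

theorem rhoB_eq_rhoA (t : Fin 2 × Fin 2 × Fin 2 → ℂ) :
    rhoB t = rhoA (t ∘ fun p => (p.2.1, p.1, p.2.2)) := rfl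

theorem rhoC_eq_rhoA (t : Fin 2 × Fin 2 × Fin 2 → ℂ) :
    rhoC t = rhoA (t ∘ fun p => (p.2.1, p.2.2, p.1)) := rfl

theorem rhoB_tucker (B : Matrix (Fin 2) (Fin 2) ℂ) {U W : Matrix (Fin 2) (Fin 2) ℂ}
    (hU : U ∈ unitaryGroup (Fin 2) ℂ) (hW : W ∈ unitaryGroup (Fin 2) ℂ)
    (t : Fin 2 × Fin 2 × Fin 2 → ℂ) : rhoB (tucker U B W t) = B * rhoB t * Bᴴ := by
  rw [rhoB_eq_rhoA, tucker_comp_swap, rhoA_tucker B hU hW, rhoB_eq_rhoA]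

theorem rhoC_tucker (C : Matrix (Fin 2) (Fin 2) ℂ) {U V : Matrix (Fin 2) (Fin 2) ℂ}
    (hU : U ∈ unitaryGroup (Fin 2) ℂ) (hV : V ∈ unitaryGroup (Fin 2) ℂ)
    (t : Fin 2 × Fin 2 × Fin 2 → ℂ) : rhoC (tucker U V C t) = C * rhoC t * Cᴴ := by
  rw [rhoC_eq_rhoA, tucker_comp_rotate, rhoA_tucker C hU hV, rhoC_eq_rhoA]

/-- Existence of HOSVD for 2×2×2 complex tensors. -/
theorem hosvd_exists (ψ : Fin 2 × Fin 2 × Fin 2 → ℂ) :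
    ∃ (U V W : Matrix (Fin 2) (Fin 2) ℂ) (t : Fin 2 × Fin 2 × Fin 2 → ℂ),
      U ∈ Matrix.unitaryGroup (Fin 2) ℂ ∧
      V ∈ Matrix.unitaryGroup (Fin 2) ℂ ∧
      W ∈ Matrix.unitaryGroup (Fin 2) ℂ ∧
      (∀ j1 j2 j3 : Fin 2, ψ (j1, j2, j3) =
        ∑ i1 : Fin 2, ∑ i2 : Fin 2, ∑ i3 : Fin 2,
          U j1 i1 * V j2 i2 * W j3 i3 * t (i1, i2, i3)) ∧
      rhoA t 0 1 = 0 ∧ rhoA t 1 0 = 0 ∧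
      rhoB t 0 1 = 0 ∧ rhoB t 1 0 = 0 ∧
      rhoC t 0 1 = 0 ∧ rhoC t 1 0 = 0 ∧
      (rhoA t 1 1).re ≤ (rhoA t 0 0).re ∧
      (rhoB t 1 1).re ≤ (rhoB t 0 0).re ∧
      (rhoC t 1 1).re ≤ (rhoC t 0 0).re := by
  obtain ⟨U, hU, dA, hdA, hUψ⟩ :=
    (rhoA_isHermitian ψ).exists_unitary_star_mul_mul_eq_diagonal_antitone
  obtain ⟨V, hV, dB, hdB, hVψ⟩ :=
    (rhoB_eq_rhoA ψ ▸ rhoA_isHermitian _).exists_unitary_star_mul_mul_eq_diagonal_antitone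
  obtain ⟨W, hW, dC, hdC, hWψ⟩ :=
    (rhoC_eq_rhoA ψ ▸ rhoA_isHermitian _).exists_unitary_star_mul_mul_eq_diagonal_antitone
  set t := tucker (star U) (star V) (star W) ψ
  have hψ : ψ = tucker U V W t := by
    rw [tucker_tucker, mem_unitaryGroup_iff.mp hU, mem_unitaryGroup_iff.mp hV,
      mem_unitaryGroup_iff.mp hW, tucker_one]
  have hA : rhoA t = star U * rhoA ψ * U := by
    rw [rhoA_tucker _ (Unitary.star_mem hV) (Unitary.star_mem hW),
      ← star_eq_conjTranspose, star_star]
  have hB : rhoB t = star V * rhoB ψ * V := by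
    rw [rhoB_tucker _ (Unitary.star_mem hU) (Unitary.star_mem hW),
      ← star_eq_conjTranspose, star_star]
  have hC : rhoC t = star W * rhoC ψ * W := by
    rw [rhoC_tucker _ (Unitary.star_mem hU) (Unitary.star_mem hV),
      ← star_eq_conjTranspose, star_star]
  refine ⟨U, V, W, t, hU, hV, hW, fun j1 j2 j3 => congrFun hψ (j1, j2, j3), ?_⟩
  simp [hA, hB, hC, hUψ, hVψ, hWψ, hdA (Fin.zero_le 1), hdB (Fin.zero_le 1), hdC (Fin.zero_le 1)]
end

section
/- Suppose a three-qubit core tensor t satisfies the three all-orthogonality conditions (vanishing off-diagonal entries of all three one-body reduced density matrices). Then |t_{112}|²(σ₁^(1)² − σ₁^(2)²) + |t_{211}|²(σ₁^(2)² − σ₁^(3)²) + |t_{121}|²(σ₁^(3)² − σ₁^(1)²) = 0, where σ₁^(n)² denotes the sum of |t|² over all entries whose n-th index equals 1. -/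
/-!
After cancelling, the claim only involves the six entries other than `t (0,0,0)` and `t (1,1,1)`.
They form a hexagon on the cube `Fin 2 × Fin 2 × Fin 2`, and the claim says that the alternating
sum of `|x|²|y|²` over its edges vanishes. Each orthogonality condition is a sum over the cube
edges flipping one index; weight it by the difference of its two hexagon edge terms. In the
weighted sum the terms involving `t (0,0,0)` or `t (1,1,1)` cancel identically, the remaining
cross terms come in pairs `w - conj w`, and what is left is the alternating hexagon sum; taking
real parts gives the claim.
-/

open ComplexConjugate

namespace Complex

theorem orthogonality_combination_eq (a b c d e f g h : ℂ) :
    (c * star g - b * star f) * (star a * e + star c * g + star b * f + star d * h)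
        + (b * star d - e * star g) * (star a * c + star e * g + star b * d + star f * h)
        + (e * star f - c * star d) * (star a * b + star e * f + star c * d + star g * h)
      = ((‖b‖ ^ 2 * ‖d‖ ^ 2 - ‖c‖ ^ 2 * ‖d‖ ^ 2 + ‖c‖ ^ 2 * ‖g‖ ^ 2 - ‖e‖ ^ 2 * ‖g‖ ^ 2
            + ‖e‖ ^ 2 * ‖f‖ ^ 2 - ‖b‖ ^ 2 * ‖f‖ ^ 2 : ℝ) : ℂ)
        + (c * star g * star b * f + b * star d * star e * g + e * star f * star c * d
          - conj (c * star g * star b * f + b * star d * star e * g + e * star f * star c * d)) := by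
  simp only [star_def, map_add, map_mul, conj_conj]
  push_cast
  simp only [← conj_mul']
  ring

theorem hexagon_sum_eq_zero_of_orthogonal {a b c d e f g h : ℂ}
    (h1 : star a * e + star c * g + star b * f + star d * h = 0)
    (h2 : star a * c + star e * g + star b * d + star f * h = 0)
    (h3 : star a * b + star e * f + star c * d + star g * h = 0) :
    ‖b‖ ^ 2 * ‖d‖ ^ 2 - ‖c‖ ^ 2 * ‖d‖ ^ 2 + ‖c‖ ^ 2 * ‖g‖ ^ 2 - ‖e‖ ^ 2 * ‖g‖ ^ 2
      + ‖e‖ ^ 2 * ‖f‖ ^ 2 - ‖b‖ ^ 2 * ‖f‖ ^ 2 = 0 := by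
  have hre := congrArg re (orthogonality_combination_eq a b c d e f g h)
  simp only [h1, h2, h3, sub_conj, mul_zero, add_zero, zero_re, add_re, ofReal_re,
    re_ofReal_mul, I_re] at hre
  exact hre.symm

end Complex

theorem allOrthogonality_implies_singular_value_relation
    (t : Fin 2 × Fin 2 × Fin 2 → ℂ)
    (h1 : star (t (0,0,0)) * t (1,0,0) + star (t (0,1,0)) * t (1,1,0)
      + star (t (0,0,1)) * t (1,0,1) + star (t (0,1,1)) * t (1,1,1) = 0)
    (h2 : star (t (0,0,0)) * t (0,1,0) + star (t (1,0,0)) * t (1,1,0)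
      + star (t (0,0,1)) * t (0,1,1) + star (t (1,0,1)) * t (1,1,1) = 0)
    (h3 : star (t (0,0,0)) * t (0,0,1) + star (t (1,0,0)) * t (1,0,1)
      + star (t (0,1,0)) * t (0,1,1) + star (t (1,1,0)) * t (1,1,1) = 0) :
    ‖t (0,0,1)‖ ^ 2 *
        ((‖t (0,0,0)‖ ^ 2 + ‖t (0,0,1)‖ ^ 2
            + ‖t (0,1,0)‖ ^ 2 + ‖t (0,1,1)‖ ^ 2)
          - (‖t (0,0,0)‖ ^ 2 + ‖t (0,0,1)‖ ^ 2
            + ‖t (1,0,0)‖ ^ 2 + ‖t (1,0,1)‖ ^ 2))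
      + ‖t (1,0,0)‖ ^ 2 *
        ((‖t (0,0,0)‖ ^ 2 + ‖t (0,0,1)‖ ^ 2
            + ‖t (1,0,0)‖ ^ 2 + ‖t (1,0,1)‖ ^ 2)
          - (‖t (0,0,0)‖ ^ 2 + ‖t (0,1,0)‖ ^ 2
            + ‖t (1,0,0)‖ ^ 2 + ‖t (1,1,0)‖ ^ 2))
      + ‖t (0,1,0)‖ ^ 2 *
        ((‖t (0,0,0)‖ ^ 2 + ‖t (0,1,0)‖ ^ 2
            + ‖t (1,0,0)‖ ^ 2 + ‖t (1,1,0)‖ ^ 2)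
          - (‖t (0,0,0)‖ ^ 2 + ‖t (0,0,1)‖ ^ 2
            + ‖t (0,1,0)‖ ^ 2 + ‖t (0,1,1)‖ ^ 2)) = 0 := by
  linear_combination Complex.hexagon_sum_eq_zero_of_orthogonal h1 h2 h3
end

section
/- Suppose a three-qubit core tensor t satisfies the three all-orthogonality conditions. Then conj(t_{112})conj(t_{221})(t_{122}t_{211} − t_{121}t_{212}) + conj(t_{121})conj(t_{212})(t_{112}t_{221} − t_{122}t_{211}) + conj(t_{122})conj(t_{211})(t_{121}t_{212} − t_{112}t_{221}) = 0. -/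
/-!
With the paper's indexing (`t₁₁₁ = t (0,0,0)`), put `w = (t₂₁₁, t₁₂₁, t₁₁₂)` and
`v = (t̄₁₂₂, t̄₂₁₂, t̄₂₂₁)`. Each all-orthogonality condition reads `t̄₁₁₁ wᵢ + t₂₂₂ vᵢ + pᵢ = 0`,
where `pᵢ` collects the two remaining products, so `p` lies in the span of `v` and `w` and the
triple product `D = p ⬝ (v × w)` vanishes. Expanding `D`, its Hermitian part is a real combination
of squared moduli, while its skew-Hermitian part `(D - D̄) / 2` is exactly the expression in the
theorem.
-/

open Matrix

theorem dot_cross_eq_zero_of_mem_span {R : Type*} [CommRing R] {u v w : Fin 3 → R}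
    (hu : u ∈ Submodule.span R {v, w}) : u ⬝ᵥ v ⨯₃ w = 0 := by
  obtain ⟨a, b, rfl⟩ := Submodule.mem_span_pair.1 hu
  simp only [add_dotProduct, smul_dotProduct, dot_self_cross, dot_cross_self, smul_zero, add_zero]

theorem allOrthogonality_implies_phase_relation
    (t : Fin 2 × Fin 2 × Fin 2 → ℂ)
    (h1 : star (t (0,0,0)) * t (1,0,0) + star (t (0,1,0)) * t (1,1,0)
      + star (t (0,0,1)) * t (1,0,1) + star (t (0,1,1)) * t (1,1,1) = 0)
    (h2 : star (t (0,0,0)) * t (0,1,0) + star (t (1,0,0)) * t (1,1,0)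
      + star (t (0,0,1)) * t (0,1,1) + star (t (1,0,1)) * t (1,1,1) = 0)
    (h3 : star (t (0,0,0)) * t (0,0,1) + star (t (1,0,0)) * t (1,0,1)
      + star (t (0,1,0)) * t (0,1,1) + star (t (1,1,0)) * t (1,1,1) = 0) :
    star (t (0,0,1)) * star (t (1,1,0))
        * (t (0,1,1) * t (1,0,0) - t (0,1,0) * t (1,0,1))
      + star (t (0,1,0)) * star (t (1,0,1))
        * (t (0,0,1) * t (1,1,0) - t (0,1,1) * t (1,0,0))
      + star (t (0,1,1)) * star (t (1,0,0))
        * (t (0,1,0) * t (1,0,1) - t (0,0,1) * t (1,1,0)) = 0 := by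
  set w : Fin 3 → ℂ := ![t (1,0,0), t (0,1,0), t (0,0,1)]
  set v : Fin 3 → ℂ := ![star (t (0,1,1)), star (t (1,0,1)), star (t (1,1,0))]
  set p : Fin 3 → ℂ := ![star (t (0,1,0)) * t (1,1,0) + star (t (0,0,1)) * t (1,0,1),
    star (t (1,0,0)) * t (1,1,0) + star (t (0,0,1)) * t (0,1,1),
    star (t (1,0,0)) * t (1,0,1) + star (t (0,1,0)) * t (0,1,1)]
  have hp : p ∈ Submodule.span ℂ {v, w} := by
    refine Submodule.mem_span_pair.2 ⟨-t (1,1,1), -star (t (0,0,0)), ?_⟩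
    simp only [v, w, p, smul_vec3, vec3_add, smul_eq_mul]
    apply vec3_eq
    · linear_combination -h1
    · linear_combination -h2
    · linear_combination -h3
  have hD := dot_cross_eq_zero_of_mem_span hp
  simp only [cross_apply, dotProduct, Fin.sum_univ_three] at hD
  have hD' := congrArg star hD
  simp only [v, w, p, Fin.isValue, cons_val] at hD hD'
  simp only [star_add, star_sub, star_mul', star_star, star_zero] at hD'
  linear_combination (hD - hD') / 2
end

section
/- A three-qubit state ψ is bi-separable as C|AB (i.e. ψ_{i1 i2 i3} = a_{i1 i2} c_{i3} for some a : Fin 2 × Fin 2 → ℂ and c : Fin 2 → ℂ) if and only if the six conditions ψ_{111}ψ_{222}=ψ_{112}ψ_{221}, ψ_{111}ψ_{212}=ψ_{211}ψ_{112}, ψ_{121}ψ_{222}=ψ_{221}ψ_{122}, ψ_{111}ψ_{122}=ψ_{112}ψ_{121}, ψ_{211}ψ_{222}=ψ_{212}ψ_{221}, ψ_{211}ψ_{122}=ψ_{212}ψ_{121} hold. -/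
/-! Viewing ψ as the 4 × 2 matrix with rows indexed by (i1, i2) and columns by i3, C|AB
bi-separability says this matrix is an outer product a cᵀ, i.e. has rank at most one. Over a field
that is the vanishing of all 2 × 2 minors: away from the zero matrix, a nonzero pivot entry
lets one take its column for `a` and its row, divided by the pivot, for `c`. -/

section OuterProduct

variable {ι κ K : Type*}

theorem exists_forall_eq_mul_iff_minors [Field K] (f : ι → κ → K) :
    (∃ (a : ι → K) (c : κ → K), ∀ i k, f i k = a i * c k) ↔
      ∀ i j k l, f i k * f j l = f i l * f j k := by
  constructor
  · rintro ⟨a, c, hac⟩ i j k l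
    simp only [hac]
    ring
  · intro hminor
    by_cases hzero : ∀ i k, f i k = 0
    · exact ⟨0, 0, by simpa using hzero⟩
    obtain ⟨p, q, hpq⟩ : ∃ p q, f p q ≠ 0 := by simpa using hzero
    refine ⟨fun i => f i q, fun k => f p k / f p q, fun i k => ?_⟩
    rw [mul_div_assoc', eq_div_iff hpq]
    linear_combination hminor i p k q

theorem minors_fin_two_iff [CommRing K] (f : ι → Fin 2 → K) :
    (∀ i j k l, f i k * f j l = f i l * f j k) ↔ ∀ i j, f i 0 * f j 1 = f i 1 * f j 0 := by
  refine ⟨fun h i j => h i j 0 1, fun h i j => ?_⟩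
  simp only [Fin.forall_fin_two, and_true, true_and]
  exact ⟨h i j, by linear_combination h j i⟩

end OuterProduct

theorem biseparable_CAB_iff
    (ψ : Fin 2 × Fin 2 × Fin 2 → ℂ) :
    (∃ (a : Fin 2 × Fin 2 → ℂ) (c : Fin 2 → ℂ),
        ∀ i1 i2 i3 : Fin 2, ψ (i1, i2, i3) = a (i1, i2) * c i3)
    ↔ (ψ (0,0,0) * ψ (1,1,1) = ψ (0,0,1) * ψ (1,1,0)
      ∧ ψ (0,0,0) * ψ (1,0,1) = ψ (1,0,0) * ψ (0,0,1)
      ∧ ψ (0,1,0) * ψ (1,1,1) = ψ (1,1,0) * ψ (0,1,1)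
      ∧ ψ (0,0,0) * ψ (0,1,1) = ψ (0,0,1) * ψ (0,1,0)
      ∧ ψ (1,0,0) * ψ (1,1,1) = ψ (1,0,1) * ψ (1,1,0)
      ∧ ψ (1,0,0) * ψ (0,1,1) = ψ (1,0,1) * ψ (0,1,0)) := by
  have h := (exists_forall_eq_mul_iff_minors fun (r : Fin 2 × Fin 2) k => ψ (r.1, r.2, k)).trans
    (minors_fin_two_iff _)
  simp only [Prod.forall] at h
  rw [h]
  simp only [Fin.forall_fin_two]
  -- sixteen ordered row pairs: the diagonal ones are trivial, the rest are the six conditions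
  grind
end

section
/- Let t define the state |S₁⟩ = t_{111}|111⟩ + t_{112}|112⟩ + t_{221}|221⟩ + t_{222}|222⟩, normalized, satisfying conj(t_{111})t_{112} + conj(t_{221})t_{222} = 0 with t_{222} ≠ 0. Then σ₁^(3)² = |t_{111}|²/(|t_{111}|² + |t_{222}|²) and σ₂^(3)² = |t_{222}|²/(|t_{111}|² + |t_{222}|²). -/
/-!
Taking norms in the orthogonality relation gives `|t₁₁₁| |t₁₁₂| = |t₂₂₁| |t₂₂₂|`. Writing
`p, q, r, s` for the four squared moduli, which sum to `1`, the identity `p q = r s` is exactly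
what turns `(p + r)(p + s) = p (p + q + r + s)` into `p + r = p / (p + s)`, and similarly for
`q + s`.
-/

lemma norm_mul_norm_eq_of_star_mul_add_star_mul_eq_zero {𝕜 : Type*} [NormedDivisionRing 𝕜]
    [StarRing 𝕜] [NormedStarGroup 𝕜] {x y z w : 𝕜} (h : star x * y + star z * w = 0) :
    ‖x‖ * ‖y‖ = ‖z‖ * ‖w‖ := by
  simpa [norm_mul, norm_star] using congrArg norm (eq_neg_of_add_eq_zero_left h)

section Weights

variable {K : Type*} [Field K] {p q r s : K}

lemma add_eq_div_of_mul_eq_mul (hsum : p + q + r + s = 1) (hmul : p * q = r * s)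
    (hps : p + s ≠ 0) : p + r = p / (p + s) := by
  rw [eq_div_iff hps]
  linear_combination p * hsum - hmul

lemma add_eq_div_of_mul_eq_mul' (hsum : p + q + r + s = 1) (hmul : p * q = r * s)
    (hps : p + s ≠ 0) : q + s = s / (p + s) := by
  rw [eq_div_iff hps]
  linear_combination s * hsum + hmul

end Weights

theorem S1_state_third_mode_singular_values_general
    (t : Fin 2 × Fin 2 × Fin 2 → ℂ)
    (hnorm : ‖t (0,0,0)‖ ^ 2 + ‖t (0,0,1)‖ ^ 2
      + ‖t (1,1,0)‖ ^ 2 + ‖t (1,1,1)‖ ^ 2 = 1)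
    (hortho : star (t (0,0,0)) * t (0,0,1) + star (t (1,1,0)) * t (1,1,1) = 0)
    (ht222 : t (1,1,1) ≠ 0) :
    ‖t (0,0,0)‖ ^ 2 + ‖t (1,1,0)‖ ^ 2
      = ‖t (0,0,0)‖ ^ 2
        / (‖t (0,0,0)‖ ^ 2 + ‖t (1,1,1)‖ ^ 2)
    ∧ ‖t (0,0,1)‖ ^ 2 + ‖t (1,1,1)‖ ^ 2
      = ‖t (1,1,1)‖ ^ 2
        / (‖t (0,0,0)‖ ^ 2 + ‖t (1,1,1)‖ ^ 2) := by
  have hmul : ‖t (0,0,0)‖ ^ 2 * ‖t (0,0,1)‖ ^ 2 = ‖t (1,1,0)‖ ^ 2 * ‖t (1,1,1)‖ ^ 2 := by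
    rw [← mul_pow, ← mul_pow, norm_mul_norm_eq_of_star_mul_add_star_mul_eq_zero hortho]
  have hps : ‖t (0,0,0)‖ ^ 2 + ‖t (1,1,1)‖ ^ 2 ≠ 0 := by
    have : 0 < ‖t (1,1,1)‖ := norm_pos_iff.mpr ht222
    positivity
  exact ⟨add_eq_div_of_mul_eq_mul hnorm hmul hps, add_eq_div_of_mul_eq_mul' hnorm hmul hps⟩

theorem S1_state_third_mode_singular_values
    (t : Fin 2 × Fin 2 × Fin 2 → ℂ)
    (hz1 : t (0,1,0) = 0) (hz2 : t (0,1,1) = 0)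
    (hz3 : t (1,0,0) = 0) (hz4 : t (1,0,1) = 0)
    (hnorm : ‖t (0,0,0)‖ ^ 2 + ‖t (0,0,1)‖ ^ 2
      + ‖t (1,1,0)‖ ^ 2 + ‖t (1,1,1)‖ ^ 2 = 1)
    (hortho : star (t (0,0,0)) * t (0,0,1) + star (t (1,1,0)) * t (1,1,1) = 0)
    (ht222 : t (1,1,1) ≠ 0) :
    ‖t (0,0,0)‖ ^ 2 + ‖t (1,1,0)‖ ^ 2
      = ‖t (0,0,0)‖ ^ 2
        / (‖t (0,0,0)‖ ^ 2 + ‖t (1,1,1)‖ ^ 2)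
    ∧ ‖t (0,0,1)‖ ^ 2 + ‖t (1,1,1)‖ ^ 2
      = ‖t (1,1,1)‖ ^ 2
        / (‖t (0,0,0)‖ ^ 2 + ‖t (1,1,1)‖ ^ 2) :=
  S1_state_third_mode_singular_values_general t hnorm hortho ht222
end
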